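/- Redistribution corollary: for any justified mechanism M = (φ, τ), there exists a justified mechanism M' = (φ, τ') with the same option rule such that (i) τ'_i(v) ≥ τ_i(v) for all i and v; (ii) B(v; M') ≤ max{0, B(v; M)} for all v; and (iii) for every agent i and every v_{-i}, max_{v_i ∈ V_i} B((v_i, v_{-i}); M') ≥ 0. -/

import Mathlib

/-- Social efficiency of an option rule. -/
def SocEff {N X : Type*} [Fintype N] (V : N → Finset (X → ℝ))
    (φ : (N → (X → ℝ)) → X) : Prop :=
  ∀ v : N → (X → ℝ), (∀ i, v i ∈ V i) → ∀ x : X, ∑ i, v i x ≤ ∑ i, v i (φ v)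

/-- Dominant-strategy incentive compatibility. -/
def DSIC {N X : Type*} [Fintype N] [DecidableEq N] (V : N → Finset (X → ℝ))
    (φ : (N → (X → ℝ)) → X) (τ : N → (N → (X → ℝ)) → ℝ) : Prop :=
  ∀ v : N → (X → ℝ), (∀ j, v j ∈ V j) → ∀ i : N, ∀ vi' ∈ V i,
    v i (φ (Function.update v i vi')) + τ i (Function.update v i vi')
      ≤ v i (φ v) + τ i v

/-- Individual rationality. -/
def IR {N X : Type*} [Fintype N] (V : N → Finset (X → ℝ))
    (φ : (N → (X → ℝ)) → X) (τ : N → (N → (X → ℝ)) → ℝ) : Prop :=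
  ∀ v : N → (X → ℝ), (∀ j, v j ∈ V j) → ∀ i : N, 0 ≤ v i (φ v) + τ i v

/-- A justified mechanism satisfies SE, DSIC, and IR. -/
def Justified {N X : Type*} [Fintype N] [DecidableEq N] (V : N → Finset (X → ℝ))
    (φ : (N → (X → ℝ)) → X) (τ : N → (N → (X → ℝ)) → ℝ) : Prop :=
  SocEff V φ ∧ DSIC V φ τ ∧ IR V φ τ

/-!
Process the agents one at a time. At agent `t`'s turn, if even `t`'s most favourable report
leaves the budget negative, pay `t` the deficit `-max_w B((w, v₋ₜ))`. This rebate depends only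
on `v₋ₜ`, so DSIC survives, and being nonnegative it preserves IR and only raises transfers.
Since `B(v) ≤ max_w B((w, v₋ₜ))`, a rebate lifts a negative budget at most to `0`, so the
budget never exceeds `max 0 B(v; M)`. After `t`'s turn the budget at `t`'s most favourable
report is nonnegative, and the later rebates, being nonnegative, cannot undo this.
-/

theorem List.rel_foldl_of_refl_of_trans {α β : Type*} {R : α → α → Prop} (refl : ∀ a, R a a)
    (trans : ∀ {a b c}, R a b → R b c → R a c) {f : α → β → α} (step : ∀ a b, R a (f a b)) :
    ∀ (l : List β) (a : α), R a (l.foldl f a)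
  | [], a => refl a
  | b :: l, a => trans (step a b) (List.rel_foldl_of_refl_of_trans refl trans step l (f a b))

open Function

section Redistribution

variable {N X : Type*} [DecidableEq N]

section AddTransfer

variable {V : N → Finset (X → ℝ)} {φ : (N → (X → ℝ)) → X} {τ : N → (N → (X → ℝ)) → ℝ}
  {t : N} {ρ : (N → (X → ℝ)) → ℝ}

def addTransfer (τ : N → (N → (X → ℝ)) → ℝ) (t : N) (ρ : (N → (X → ℝ)) → ℝ) :
    N → (N → (X → ℝ)) → ℝ :=
  fun j v => τ j v + if j = t then ρ v else 0

theorem le_addTransfer (hρ : 0 ≤ ρ) : τ ≤ addTransfer τ t ρ := by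
  intro j v
  unfold addTransfer
  split_ifs
  exacts [le_add_of_nonneg_right (hρ v), (add_zero _).ge]

variable [Fintype N]

theorem sum_addTransfer (v : N → (X → ℝ)) :
    ∑ j, addTransfer τ t ρ j v = ∑ j, τ j v + ρ v := by
  simp [addTransfer, Finset.sum_add_distrib]

theorem DSIC.addTransfer (hτ : DSIC V φ τ) (hρ : ∀ v w, ρ (update v t w) = ρ v) :
    DSIC V φ (addTransfer τ t ρ) := by
  intro v hv i w hw
  have hτ_dev := hτ v hv i w hw
  dsimp only [_root_.addTransfer]
  split_ifs with hi
  · subst hi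
    rw [hρ]
    linarith
  · linarith

theorem IR.addTransfer (hτ : IR V φ τ) (hρ : 0 ≤ ρ) : IR V φ (addTransfer τ t ρ) :=
  fun v hv i => (hτ v hv i).trans (add_le_add_right (le_addTransfer hρ i v) _)

theorem Justified.addTransfer (hτ : Justified V φ τ) (hρ_nonneg : 0 ≤ ρ)
    (hρ : ∀ v w, ρ (update v t w) = ρ v) : Justified V φ (addTransfer τ t ρ) :=
  ⟨hτ.1, DSIC.addTransfer hτ.2.1 hρ, IR.addTransfer hτ.2.2 hρ_nonneg⟩

end AddTransfer

section Rebate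

variable [Fintype N]
variable (V : N → Finset (X → ℝ)) (hVne : ∀ i, (V i).Nonempty)
  {φ : (N → (X → ℝ)) → X} {τ : N → (N → (X → ℝ)) → ℝ} {t : N}

noncomputable def maxBudget (τ : N → (N → (X → ℝ)) → ℝ) (t : N) (v : N → (X → ℝ)) : ℝ :=
  (V t).sup' (hVne t) fun w => ∑ j, τ j (update v t w)

theorem maxBudget_update (v : N → (X → ℝ)) (w : X → ℝ) :
    maxBudget V hVne τ t (update v t w) = maxBudget V hVne τ t v := by
  simp [maxBudget]

theorem sum_le_maxBudget {v : N → (X → ℝ)} (hv : v t ∈ V t) :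
    ∑ j, τ j v ≤ maxBudget V hVne τ t v := by
  have := Finset.le_sup' (fun w => ∑ j, τ j (update v t w)) hv
  rwa [update_eq_self] at this

noncomputable def rebateStep (τ : N → (N → (X → ℝ)) → ℝ) (t : N) : N → (N → (X → ℝ)) → ℝ :=
  addTransfer τ t fun v => max 0 (-maxBudget V hVne τ t v)

theorem le_rebateStep : τ ≤ rebateStep V hVne τ t :=
  le_addTransfer fun _ => le_max_left _ _

theorem Justified.rebateStep (hτ : Justified V φ τ) : Justified V φ (rebateStep V hVne τ t) :=
  Justified.addTransfer hτ (fun _ => le_max_left _ _) fun _ _ => by rw [maxBudget_update]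

theorem sum_rebateStep_le {v : N → (X → ℝ)} (hv : v t ∈ V t) :
    ∑ j, rebateStep V hVne τ t j v ≤ max 0 (∑ j, τ j v) := by
  have hle := sum_le_maxBudget V hVne (τ := τ) hv
  rw [rebateStep, sum_addTransfer]
  rcases le_total 0 (maxBudget V hVne τ t v) with h | h
  · rw [max_eq_left (neg_nonpos.2 h), add_zero]
    exact le_max_right _ _
  · rw [max_eq_right (neg_nonneg.2 h)]
    exact le_max_of_le_left (by linarith)

theorem exists_nonneg_sum_rebateStep (v : N → (X → ℝ)) :
    ∃ w ∈ V t, 0 ≤ ∑ j, rebateStep V hVne τ t j (update v t w) := by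
  obtain ⟨w, hw, hmax⟩ : ∃ w ∈ V t, maxBudget V hVne τ t v = ∑ j, τ j (update v t w) :=
    Finset.exists_mem_eq_sup' (hVne t) _
  refine ⟨w, hw, ?_⟩
  rw [rebateStep, sum_addTransfer, maxBudget_update, hmax]
  exact neg_le_iff_add_nonneg'.1 (le_max_right _ _)

noncomputable def redistribute (τ : N → (N → (X → ℝ)) → ℝ) : N → (N → (X → ℝ)) → ℝ :=
  Finset.univ.toList.foldl (rebateStep V hVne) τ

theorem le_redistribute : τ ≤ redistribute V hVne τ :=
  List.rel_foldl_of_refl_of_trans le_refl le_trans (fun _ _ => le_rebateStep V hVne) _ _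

theorem Justified.redistribute (hτ : Justified V φ τ) : Justified V φ (redistribute V hVne τ) :=
  List.rel_foldl_of_refl_of_trans (R := fun τ τ' => Justified V φ τ → Justified V φ τ')
    (fun _ => id) (fun h h' => h' ∘ h) (fun _ _ => Justified.rebateStep V hVne) _ _ hτ

theorem sum_redistribute_le {v : N → (X → ℝ)} (hv : ∀ j, v j ∈ V j) :
    ∑ j, redistribute V hVne τ j v ≤ max 0 (∑ j, τ j v) := by
  refine List.rel_foldl_of_refl_of_trans
    (R := fun τ τ' : N → (N → (X → ℝ)) → ℝ => ∑ j, τ' j v ≤ max 0 (∑ j, τ j v))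
    (fun _ => le_max_right _ _) (fun h h' => h'.trans (max_le (le_max_left _ _) h))
    (fun _ t => sum_rebateStep_le V hVne (hv t)) _ _

theorem exists_nonneg_sum_redistribute (v : N → (X → ℝ)) (i : N) :
    ∃ w ∈ V i, 0 ≤ ∑ j, redistribute V hVne τ j (update v i w) := by
  obtain ⟨l₁, l₂, hl⟩ := List.mem_iff_append.1 (Finset.mem_toList.2 (Finset.mem_univ i))
  set τ₁ := l₁.foldl (rebateStep V hVne) τ
  obtain ⟨w, hw, hsum⟩ := exists_nonneg_sum_rebateStep V hVne (τ := τ₁) v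
  have hmono : rebateStep V hVne τ₁ i ≤ redistribute V hVne τ := by
    rw [redistribute, hl, List.foldl_append, List.foldl_cons]
    exact List.rel_foldl_of_refl_of_trans le_refl le_trans (fun _ _ => le_rebateStep V hVne) _ _
  exact ⟨w, hw, hsum.trans (Finset.sum_le_sum fun j _ => hmono j _)⟩

end Rebate

end Redistribution

/-- Redistribution: any justified mechanism can be modified, keeping the option
rule, into a justified mechanism that pays every agent at least as much, whose
budget is at most `max 0` of the original budget, and whose budget cannot be
made negative for all reports of any single agent. -/
theorem redistribution {N X : Type*} [Fintype N] [DecidableEq N]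
    (V : N → Finset (X → ℝ)) (hVne : ∀ i, (V i).Nonempty)
    (φ : (N → (X → ℝ)) → X) (τ : N → (N → (X → ℝ)) → ℝ)
    (hJ : Justified V φ τ) :
    ∃ τ' : N → (N → (X → ℝ)) → ℝ, Justified V φ τ' ∧
      (∀ v : N → (X → ℝ), (∀ j, v j ∈ V j) → ∀ i : N, τ i v ≤ τ' i v) ∧
      (∀ v : N → (X → ℝ), (∀ j, v j ∈ V j) →
        (∑ i, τ' i v) ≤ max 0 (∑ i, τ i v)) ∧
      (∀ v : N → (X → ℝ), (∀ j, v j ∈ V j) → ∀ i : N,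
        ∃ vi ∈ V i, 0 ≤ ∑ j, τ' j (Function.update v i vi)) :=
  ⟨redistribute V hVne τ, hJ.redistribute V hVne, fun v _ i => le_redistribute V hVne i v,
    fun _ hv => sum_redistribute_le V hVne hv,
    fun v _ i => exists_nonneg_sum_redistribute V hVne v i⟩
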